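/- arXiv:1303.6991 — 5 statements merged into one kernel-verified Lean document; each statement's English description precedes it below -/
import Mathlib

section
/- Let X be a topological space and f : X → ℝ ∪ {-∞}. The correspondence F : X → Set X defined by F x = {y ∈ X : f y ≥ f x} is transfer closed-valued on X if and only if f is transfer upper continuous on X. -/
/-- The correspondence `F x = {y | f y ≥ f x}` is transfer closed-valued on `X`
iff `f : X → ℝ ∪ {-∞}` is transfer upper continuous on `X`. -/
theorem stmt1 {X : Type*} [TopologicalSpace X] (f : X → EReal) :
    (∀ x : X, ∀ y : X, y ∉ {z : X | f x ≤ f z} →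
        ∃ x' : X, y ∉ closure {z : X | f x' ≤ f z}) ↔
      (∀ x y : X, f y < f x →
        ∃ x' : X, ∃ N ∈ nhds y, ∀ z ∈ N, f z < f x') := by
  have key : ∀ (x' y : X), y ∉ closure {z : X | f x' ≤ f z} ↔
      ∃ N ∈ nhds y, ∀ z ∈ N, f z < f x' := by
    intro x' y
    rw [mem_closure_iff_nhds]
    push_neg
    constructor
    · rintro ⟨N, hN, h⟩
      refine ⟨N, hN, fun z hz => lt_of_not_ge fun hle => ?_⟩
      have : z ∈ N ∩ {w : X | f x' ≤ f w} := ⟨hz, hle⟩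
      rw [h] at this
      exact this
    · rintro ⟨N, hN, h⟩
      refine ⟨N, hN, Set.eq_empty_iff_forall_notMem.2 ?_⟩
      rintro z ⟨hz, hle⟩
      exact absurd hle (not_le.2 (h z hz))
  constructor
  · intro H x y hlt
    obtain ⟨x', hx'⟩ := H x y (by simpa using not_le.2 hlt)
    exact ⟨x', (key x' y).1 hx'⟩
  · intro H x y hy
    obtain ⟨x', N, hN, h⟩ := H x y (not_le.1 (by simpa using hy))
    exact ⟨x', (key x' y).2 ⟨N, hN, h⟩⟩
end

section
/- Let X be a compact subset of a topological space and f : X → ℝ ∪ {-∞}. Then f attains its maximum on X if and only if f is transfer weakly upper continuous on X. -/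
/-- Tian–Zhou generalized Weierstrass theorem: a function `f : X → ℝ ∪ {-∞}` on a
nonempty compact space attains its maximum iff it is transfer weakly upper
continuous. -/
theorem stmt2 {X : Type*} [TopologicalSpace X] [CompactSpace X] [Nonempty X]
    (f : X → EReal) :
    (∃ x : X, ∀ y : X, f y ≤ f x) ↔
      (∀ x y : X, f y < f x →
        ∃ x' : X, ∃ N ∈ nhds y, ∀ z ∈ N, f z ≤ f x') := by
  constructor
  · rintro ⟨x, hx⟩ a y _
    exact ⟨x, Set.univ, Filter.univ_mem, fun z _ => hx z⟩
  · intro H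
    by_contra hno
    push_neg at hno
    -- for each y, pick a witness
    have key : ∀ y : X, ∃ x' : X, ∃ N ∈ nhds y, ∀ z ∈ N, f z ≤ f x' := by
      intro y
      obtain ⟨x, hx⟩ := hno y
      exact H x y hx
    choose g N hN hb using key
    obtain ⟨t, ht⟩ := isCompact_univ.elim_nhds_subcover N (fun y _ => hN y)
    have htne : t.Nonempty := by
      rcases ‹Nonempty X› with ⟨x0⟩
      have := ht.2 (Set.mem_univ x0)
      simp only [Set.mem_iUnion] at this
      obtain ⟨y, hy, _⟩ := this
      exact ⟨y, hy⟩
    obtain ⟨y0, hy0, hmax⟩ := t.exists_max_image (fun y => f (g y)) htne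
    obtain ⟨z, hz⟩ := hno (g y0)
    have : z ∈ ⋃ y ∈ t, N y := ht.2 (Set.mem_univ z)
    simp only [Set.mem_iUnion] at this
    obtain ⟨y, hy, hzN⟩ := this
    exact absurd ((hb y z hzN).trans (hmax y hy)) (not_le.mpr hz)
end

section
/- Let G be an n-player game where each strategy set G_i is a Hausdorff topological space and each payoff u_i(·, s_{-i}) is transfer weakly upper continuous. Suppose G →* H (iterated reduction: there is a sequence of pairings A^t with A^0 = G, each A^t → A^{t+1} a reduction under strict dominance, and H_i = ⋂_t A^t_i), and the dominance relation ≻_H has property K: for each player i and y ∈ G_i, there exists z₀ ∈ G_i with z₀ ⪰_H y such that {z ∈ G_i : z ⪰_H z₀} is compact. If y ≻_H x for some x, y ∈ G_i, then there exists z* ∈ H_i such that z* ≻_H x and no z ∈ G_i satisfies z ≻_H z*. -/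
/-- `y` strictly dominates `x` for player `i` given the pairing `H`:
`H₋ᵢ ≠ ∅` and `uᵢ (y, s₋ᵢ) > uᵢ (x, s₋ᵢ)` for all `s₋ᵢ ∈ H₋ᵢ`. -/
def StrictDom {ι : Type*} [DecidableEq ι] {G : ι → Type*}
    (u : ∀ i : ι, (∀ j : ι, G j) → ℝ) (H : ∀ j : ι, Set (G j)) (i : ι) (y x : G i) : Prop :=
  (∃ s : ∀ j : ι, G j, ∀ j, j ≠ i → s j ∈ H j) ∧
  ∀ s : ∀ j : ι, G j, (∀ j, j ≠ i → s j ∈ H j) →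
    u i (Function.update s i x) < u i (Function.update s i y)

/-- `z ⪰_H z₀` : `uᵢ (z, s₋ᵢ) ≥ uᵢ (z₀, s₋ᵢ)` for all `s₋ᵢ ∈ H₋ᵢ`. -/
def WeakDom {ι : Type*} [DecidableEq ι] {G : ι → Type*}
    (u : ∀ i : ι, (∀ j : ι, G j) → ℝ) (H : ∀ j : ι, Set (G j)) (i : ι) (z z₀ : G i) : Prop :=
  ∀ s : ∀ j : ι, G j, (∀ j, j ≠ i → s j ∈ H j) →
    u i (Function.update s i z₀) ≤ u i (Function.update s i z)

/-- A reduction `A → B`: `Bᵢ ⊆ Aᵢ` and every deleted strategy is strictly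
dominated in `A`. -/
def Reduction {ι : Type*} [DecidableEq ι] {G : ι → Type*}
    (u : ∀ i : ι, (∀ j : ι, G j) → ℝ) (A B : ∀ j : ι, Set (G j)) : Prop :=
  (∀ i : ι, B i ⊆ A i) ∧
  ∀ i : ι, ∀ x ∈ A i \ B i, ∃ y ∈ A i, StrictDom u A i y x

/-- `G →* H`: there is a sequence of parings `A⁰ = G`, `Aᵗ → Aᵗ⁺¹`,
with `Hᵢ = ⋂ₜ Aᵗᵢ`. -/
def IterReduction {ι : Type*} [DecidableEq ι] {G : ι → Type*}
    (u : ∀ i : ι, (∀ j : ι, G j) → ℝ) (H : ∀ j : ι, Set (G j)) : Prop :=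
  ∃ A : ℕ → ∀ j : ι, Set (G j), (A 0 = fun _ => Set.univ) ∧
    (∀ t, Reduction u (A t) (A (t + 1))) ∧ ∀ i : ι, H i = ⋂ t, A t i

/-- Generalized Dufwenberg–Stegeman lemma for own-transfer weakly upper
continuous games whose dominance relation `≻_H` has property `K`. -/
theorem stmt6 {ι : Type*} [Fintype ι] [DecidableEq ι] {G : ι → Type*}
    [∀ i, TopologicalSpace (G i)] [∀ i, T2Space (G i)]
    (u : ∀ i : ι, (∀ j : ι, G j) → ℝ)
    (htwu : ∀ i (s : ∀ j : ι, G j), ∀ x y : G i,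
      u i (Function.update s i y) < u i (Function.update s i x) →
      ∃ x' : G i, ∃ N ∈ nhds y, ∀ z ∈ N,
        u i (Function.update s i z) ≤ u i (Function.update s i x'))
    (H : ∀ j : ι, Set (G j)) (hred : IterReduction u H)
    (hK : ∀ i, ∀ y : G i, ∃ z₀ : G i, WeakDom u H i z₀ y ∧
      IsCompact {z : G i | WeakDom u H i z z₀})
    {i : ι} {x y : G i} (hdom : StrictDom u H i y x) :
    ∃ zs ∈ H i, StrictDom u H i zs x ∧ ∀ z : G i, ¬ StrictDom u H i z zs := by
  classical
  obtain ⟨A, hA0, hAred, hAH⟩ := hred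
  obtain ⟨⟨s₀, hs₀⟩, hxy⟩ := hdom
  obtain ⟨z₀, hz₀y, hz₀K⟩ := hK i y
  set P : Set (G i) :=
    {ζ | WeakDom u H i ζ y ∧ IsCompact {z : G i | WeakDom u H i z ζ}} with hP
  have hz₀P : z₀ ∈ P := ⟨hz₀y, hz₀K⟩
  have hwtrans : ∀ {a b c : G i}, WeakDom u H i b a → WeakDom u H i c b →
      WeakDom u H i c a := fun hba hcb s hs => (hba s hs).trans (hcb s hs)
  have hwrefl : ∀ a : G i, WeakDom u H i a a := fun a s hs => le_rfl
  obtain ⟨m, hm⟩ := exists_maximal_of_chains_bounded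
      (r := fun (a b : P) => WeakDom u H i b.1 a.1)
      (fun c hc => by
        rcases c.eq_empty_or_nonempty with rfl | ⟨a₀, ha₀⟩
        · exact ⟨⟨z₀, hz₀P⟩, fun a ha => absurd ha (Set.notMem_empty a)⟩
        · haveI : Nonempty c := ⟨⟨a₀, ha₀⟩⟩
          have hne : (⋂ (a : c), {z : G i | WeakDom u H i z a.1.1}).Nonempty := by
            apply IsCompact.nonempty_iInter_of_directed_nonempty_isCompact_isClosed
            · rintro ⟨a, ha⟩ ⟨b, hb⟩
              rcases eq_or_ne a b with rfl | hab
              · exact ⟨⟨a, ha⟩, le_refl _, le_refl _⟩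
              · rcases hc ha hb hab with h | h
                · exact ⟨⟨b, hb⟩, fun z hz => hwtrans h hz, le_refl _⟩
                · exact ⟨⟨a, ha⟩, le_refl _, fun z hz => hwtrans h hz⟩
            · exact fun a => ⟨a.1.1, hwrefl _⟩
            · exact fun a => a.1.2.2
            · exact fun a => a.1.2.2.isClosed
          obtain ⟨zb, hzb⟩ := hne
          simp only [Set.mem_iInter, Set.mem_setOf_eq] at hzb
          obtain ⟨ζ, hζzb, hζK⟩ := hK i zb
          have hζP : ζ ∈ P :=
            ⟨hwtrans (hwtrans a₀.2.1 (hzb ⟨a₀, ha₀⟩)) hζzb, hζK⟩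
          exact ⟨⟨ζ, hζP⟩, fun a ha => hwtrans (hzb ⟨a, ha⟩) hζzb⟩)
      (fun hab hbc => hwtrans hab hbc)
  -- m is undominated
  have hmax : ∀ z : G i, ¬ StrictDom u H i z m.1 := by
    intro z hz
    obtain ⟨ζ, hζz, hζK⟩ := hK i z
    have hζm : WeakDom u H i ζ m.1 :=
      fun s hs => ((hz.2 s hs).le).trans (hζz s hs)
    have hζP : ζ ∈ P := ⟨hwtrans m.2.1 hζm, hζK⟩
    have hmζ : WeakDom u H i m.1 ζ := hm ⟨ζ, hζP⟩ hζm
    have := hmζ s₀ hs₀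
    have := hζz s₀ hs₀
    have := hz.2 s₀ hs₀
    linarith
  -- m survives the iterated reduction
  have hmA : ∀ t, m.1 ∈ A t i := by
    intro t
    induction t with
    | zero => rw [hA0]; trivial
    | succ t ih =>
      by_contra h
      obtain ⟨w, hw, hwd⟩ := (hAred t).2 i m.1 ⟨ih, h⟩
      refine hmax w ⟨⟨s₀, hs₀⟩, fun s hs => hwd.2 s fun j hj => ?_⟩
      have : s j ∈ ⋂ t, A t j := (hAH j) ▸ hs j hj
      exact Set.mem_iInter.1 this t
  have hmH : m.1 ∈ H i := by
    rw [hAH i]; exact Set.mem_iInter.2 hmA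
  refine ⟨m.1, hmH, ⟨⟨s₀, hs₀⟩, fun s hs => lt_of_lt_of_le (hxy s hs) (m.2.1 s hs)⟩,
    hmax⟩
end

section
/- For a finite game G with pairing H, the reductions (Δ(G) ⇛ Δ(H)) and (G ⇉ H) are equivalent: every mixed strategy in Δ(G_i) \ Δ(H_i) is strictly dominated (in the sense ≻_H) by some mixed strategy in Δ(H_i) if and only if every pure strategy in G_i \ H_i is strictly dominated by some mixed strategy in Δ(H_i). -/
open MeasureTheory

/-- The measure of a finset is the sum of the measures of its singletons. -/
theorem msum {α : Type*} [MeasurableSpace α] [MeasurableSingletonClass α]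
    (m : Measure α) (s : Finset α) : m ↑s = ∑ x ∈ s, m {x} := by
  rw [show (↑s : Set α) = ⋃ x ∈ s, {x} by ext; simp]
  exact measure_biUnion_finset (fun x _ y _ hxy => by simpa using hxy)
    (fun _ _ => measurableSet_singleton _)

/-- `μ ≻_H m`: `∫ uᵢ (sᵢ, s₋ᵢ) dμ > ∫ uᵢ (sᵢ, s₋ᵢ) dm` for all pure
`s₋ᵢ ∈ H₋ᵢ`. -/
def MixDomM {ι : Type*} [DecidableEq ι] {G : ι → Type*}
    [∀ i, MeasurableSpace (G i)]
    (u : ∀ i : ι, (∀ j : ι, G j) → ℝ) (H : ∀ j : ι, Set (G j)) (i : ι)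
    (μ m : Measure (G i)) : Prop :=
  ∀ s : ∀ j : ι, G j, (∀ j, j ≠ i → s j ∈ H j) →
    ∫ t, u i (Function.update s i t) ∂m < ∫ t, u i (Function.update s i t) ∂μ

/-- `μ ≻_H x`: `∫ uᵢ (sᵢ, s₋ᵢ) dμ > uᵢ (x, s₋ᵢ)` for all `s₋ᵢ ∈ H₋ᵢ`. -/
def MixDomP {ι : Type*} [DecidableEq ι] {G : ι → Type*}
    [∀ i, MeasurableSpace (G i)]
    (u : ∀ i : ι, (∀ j : ι, G j) → ℝ) (H : ∀ j : ι, Set (G j)) (i : ι)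
    (μ : Measure (G i)) (x : G i) : Prop :=
  ∀ s : ∀ j : ι, G j, (∀ j, j ≠ i → s j ∈ H j) →
    u i (Function.update s i x) < ∫ t, u i (Function.update s i t) ∂μ

/-- For a finite game, `Δ(G) ⇛ Δ(H)` is equivalent to `G ⇉ H`. -/
theorem stmt14 {ι : Type*} [Fintype ι] [DecidableEq ι] {G : ι → Type*}
    [∀ i, Fintype (G i)] [∀ i, MeasurableSpace (G i)]
    [∀ i, MeasurableSingletonClass (G i)]
    (u : ∀ i : ι, (∀ j : ι, G j) → ℝ) (H : ∀ j : ι, Set (G j)) :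
    (∀ i : ι, ∀ m : Measure (G i), IsProbabilityMeasure m → m (H i) ≠ 1 →
      ∃ μ : Measure (G i), IsProbabilityMeasure μ ∧ μ (H i) = 1 ∧
        MixDomM u H i μ m) ↔
    (∀ i : ι, ∀ x : G i, x ∉ H i →
      ∃ μ : Measure (G i), IsProbabilityMeasure μ ∧ μ (H i) = 1 ∧
        MixDomP u H i μ x) := by
  classical
  constructor
  · -- Δ(G) ⇛ Δ(H) → G ⇉ H
    intro h i x hx
    have hd : (Measure.dirac x) (H i) ≠ 1 := by
      rw [Measure.dirac_apply' x ((Set.toFinite (H i)).measurableSet)]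
      simp [Set.indicator_of_notMem hx]
    obtain ⟨μ, hμp, hμ1, hdom⟩ := h i (Measure.dirac x) (by infer_instance) hd
    refine ⟨μ, hμp, hμ1, fun s hs => ?_⟩
    have := hdom s hs
    rwa [integral_dirac] at this
  · -- G ⇉ H → Δ(G) ⇛ Δ(H)
    intro h i m hm hne
    choose ν hν1 hν2 hν3 using h i
    set ν' : G i → Measure (G i) := fun x =>
      if hx : x ∈ H i then Measure.dirac x else ν x hx with hν'
    have hν'p : ∀ x, (ν' x) Set.univ = 1 := fun x => by
      by_cases hx : x ∈ H i
      · simp only [hν', dif_pos hx]; simp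
      · simp only [hν', dif_neg hx]; exact (hν1 x hx).measure_univ
    have hν'1 : ∀ x, x ∉ H i → (ν' x) (H i) = 1 := fun x hx => by
      simp only [hν', dif_neg hx]; exact hν2 x hx
    have hν'3 : ∀ x, x ∉ H i → MixDomP u H i (ν' x) x := fun x hx => by
      simp only [hν', dif_neg hx]; exact hν3 x hx
    set C : Finset (G i) := Finset.univ.filter (fun x => x ∉ H i) with hC
    have hxC : ∀ x : G i, x ∈ C ↔ x ∉ H i := by intro x; simp [hC]
    have hCc : (↑C : Set (G i)) = (H i)ᶜ := by ext t; simp [hC]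
    have hHm : MeasurableSet (H i) := (Set.toFinite (H i)).measurableSet
    have hsumC : ∑ x ∈ C, m {x} = m ((H i)ᶜ) := by rw [← hCc, msum]
    set μ : Measure (G i) := m.restrict (H i) + ∑ x ∈ C, m {x} • ν' x with hμdef
    have hν'1' : ∀ s : Set (G i), H i ⊆ s → ∀ x ∈ C, (ν' x) s = 1 := by
      intro s hsub x hx
      refine le_antisymm (le_of_le_of_eq (measure_mono (Set.subset_univ s)) (hν'p x)) ?_
      calc (1 : ENNReal) = (ν' x) (H i) := (hν'1 x ((hxC x).1 hx)).symm
        _ ≤ (ν' x) s := measure_mono hsub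
    have hkey : ∀ s : Set (G i), MeasurableSet s → H i ⊆ s → μ s = 1 := by
      intro s hsm hsub
      have h1 : μ s = m (s ∩ H i) + ∑ x ∈ C, m {x} * (ν' x) s := by
        simp only [hμdef, Measure.add_apply, Measure.finset_sum_apply,
          Measure.smul_apply, smul_eq_mul, Measure.restrict_apply hsm]
      rw [h1, Set.inter_eq_right.2 hsub]
      rw [Finset.sum_congr rfl (fun x hx => by rw [hν'1' s hsub x hx, mul_one])]
      rw [hsumC, measure_add_measure_compl hHm, measure_univ]
    have hμ1 : μ (H i) = 1 := hkey _ hHm subset_rfl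
    have hμuniv : μ Set.univ = 1 := hkey _ MeasurableSet.univ (Set.subset_univ _)
    haveI hμp : IsProbabilityMeasure μ := ⟨hμuniv⟩
    refine ⟨μ, hμp, hμ1, fun s hs => ?_⟩
    haveI : IsFiniteMeasure m := ⟨by rw [hm.measure_univ]; exact ENNReal.one_lt_top⟩
    set f : G i → ℝ := fun t => u i (Function.update s i t) with hf
    -- finiteness instances
    have hfin : ∀ x : G i, (m {x} • ν' x) Set.univ < ⊤ := by
      intro x
      simp only [Measure.smul_apply, smul_eq_mul, hν'p x, mul_one]
      exact measure_lt_top m {x}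
    haveI : IsFiniteMeasure (∑ x ∈ C, m {x} • ν' x) := by
      refine ⟨?_⟩
      rw [Measure.finset_sum_apply]
      exact (ENNReal.sum_lt_top).2 fun x _ => hfin x
    -- integral of f w.r.t. μ
    have hμint : ∫ t, f t ∂μ
        = ∫ t in H i, f t ∂m + ∑ x ∈ C, (m {x}).toReal • ∫ t, f t ∂(ν' x) := by
      have e1 : Integrable f (m.restrict (H i)) := Integrable.of_finite
      have e2 : Integrable f (∑ x ∈ C, m {x} • ν' x) := Integrable.of_finite
      rw [hμdef, integral_add_measure e1 e2,
        integral_finset_sum_measure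
          (fun x _ => by haveI : IsFiniteMeasure (m {x} • ν' x) := ⟨hfin x⟩; exact Integrable.of_finite)]
      congr 1
      exact Finset.sum_congr rfl fun x _ => integral_smul_measure _ _
    -- integral of f w.r.t. m
    have hmint : ∫ t, f t ∂m
        = ∫ t in H i, f t ∂m + ∑ x ∈ C, (m {x}).toReal • f x := by
      rw [← integral_add_compl hHm (Integrable.of_finite (μ := m) (f := f)), ← hCc,
        integral_finset _ _]
      rfl
      exact (Integrable.of_finite (μ := m) (f := f)).integrableOn
    show ∫ t, f t ∂m < ∫ t, f t ∂μ
    rw [hμint, hmint]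
    refine (add_lt_add_iff_left _).2 ?_
    -- there is a point of positive mass outside H i
    have hCne : ∃ x ∈ C, m {x} ≠ 0 := by
      by_contra hcon
      push_neg at hcon
      have h0 : m ((H i)ᶜ) = 0 := by
        rw [← hsumC]
        exact Finset.sum_eq_zero hcon
      exact hne (by rw [← measure_univ (μ := m), ← measure_add_measure_compl hHm,
        h0, add_zero])
    obtain ⟨x₀, hx₀C, hx₀⟩ := hCne
    refine Finset.sum_lt_sum (fun x hx => ?_) ⟨x₀, hx₀C, ?_⟩
    · have hfx : f x ≤ ∫ t, f t ∂(ν' x) := le_of_lt (hν'3 x ((hxC x).1 hx) s hs)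
      exact smul_le_smul_of_nonneg_left hfx ENNReal.toReal_nonneg
    · have hfx : f x₀ < ∫ t, f t ∂(ν' x₀) := hν'3 x₀ ((hxC x₀).1 hx₀C) s hs
      have hpos : 0 < (m {x₀}).toReal :=
        ENNReal.toReal_pos hx₀ (measure_ne_top m _)
      exact smul_lt_smul_of_pos_left hfx hpos
end

section
/- In the two-player game on [0,1]² with u₁(x,y) = 1 + x + y if x ∈ ℚ and u₁(x,y) = x if x ∉ ℚ, the function u₁(·, y) is transfer upper continuous on [0,1] for every y, but is not upper semicontinuous. -/
open scoped Classical

/-- The payoff `u₁` of the example on `[0,1]²`: `u₁ (x, y) = 1 + x + y` if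
`x ∈ ℚ` and `u₁ (x, y) = x` if `x ∉ ℚ`. -/
noncomputable def uEx19 (x y : ℝ) : ℝ :=
  if Irrational x then x else 1 + x + y

/-- For every `y ∈ [0,1]`, `uEx19 (·, y)` is transfer upper continuous on
`[0,1]` but not upper semicontinuous. -/
theorem stmt19 :
    ∀ y ∈ Set.Icc (0:ℝ) 1,
      ((∀ a ∈ Set.Icc (0:ℝ) 1, ∀ b ∈ Set.Icc (0:ℝ) 1, uEx19 b y < uEx19 a y →
        ∃ x' ∈ Set.Icc (0:ℝ) 1, ∃ N ∈ nhdsWithin b (Set.Icc (0:ℝ) 1),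
          ∀ z ∈ N ∩ Set.Icc (0:ℝ) 1, uEx19 z y < uEx19 x' y) ∧
      ¬ (∀ r : ℝ, IsClosed {x : ℝ | x ∈ Set.Icc (0:ℝ) 1 ∧ r ≤ uEx19 x y})) := by
  intro y hy
  have hy0 : (0:ℝ) ≤ y := hy.1
  have h1irr : ¬ Irrational (1:ℝ) := by
    simp
  have hu1 : uEx19 1 y = 2 + y := by
    simp [uEx19, h1irr]; ring
  constructor
  · intro a ha b hb hlt
    have hble : uEx19 a y ≤ 2 + y := by
      by_cases hz : Irrational a
      · simp only [uEx19, if_pos hz]; linarith [ha.2]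
      · simp only [uEx19, if_neg hz]; linarith [ha.2]
    by_cases hb1 : b < 1
    · refine ⟨1, ⟨zero_le_one, le_refl 1⟩, Set.Iio 1,
        mem_nhdsWithin_of_mem_nhds (Iio_mem_nhds hb1), ?_⟩
      rintro z ⟨hz1, hz0, hz2⟩
      rw [hu1]
      by_cases hz : Irrational z
      · simp only [uEx19, if_pos hz]; linarith
      · simp only [uEx19, if_neg hz]
        have : z < 1 := hz1
        linarith
    · exfalso
      have hb1' : b = 1 := le_antisymm hb.2 (not_lt.mp hb1)
      rw [hb1', hu1] at hlt
      linarith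
  · intro h
    have hclosed := (h (1 + y)).closure_eq
    set c : ℝ := Real.sqrt 2 / 2 with hc
    have hs2 : Real.sqrt 2 < 2 := by
      nlinarith [Real.sq_sqrt (show (0:ℝ) ≤ 2 by norm_num), Real.sqrt_nonneg 2]
    have hs0 : 0 < Real.sqrt 2 := Real.sqrt_pos.mpr (by norm_num)
    have hc01 : c ∈ Set.Ioo (0:ℝ) 1 := ⟨by positivity, by rw [hc]; linarith⟩
    have hcirr : Irrational c := by
      rw [hc]
      have := irrational_sqrt_two
      rw [show Real.sqrt 2 / 2 = Real.sqrt 2 * (1/2 : ℚ) by push_cast; ring]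
      exact this.mul_ratCast (by norm_num)
    have hmem : c ∈ closure {x : ℝ | x ∈ Set.Icc (0:ℝ) 1 ∧ 1 + y ≤ uEx19 x y} := by
      rw [mem_closure_iff]
      intro o ho hco
      have hop : IsOpen (o ∩ Set.Ioo (0:ℝ) 1) := ho.inter isOpen_Ioo
      obtain ⟨ε, hε, hsub⟩ := Metric.isOpen_iff.mp hop c ⟨hco, hc01⟩
      obtain ⟨q, hq1, hq2⟩ := exists_rat_btwn (show c - min ε c / 2 < c by
        have : 0 < min ε c := lt_min hε hc01.1
        linarith)
      have hball : (q:ℝ) ∈ Metric.ball c ε := by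
        rw [Metric.mem_ball, Real.dist_eq, abs_lt]
        have h1 : min ε c ≤ ε := min_le_left _ _
        constructor <;> linarith
      obtain ⟨hqo, hqI⟩ := hsub hball
      refine ⟨q, hqo, ⟨⟨le_of_lt hqI.1, le_of_lt hqI.2⟩, ?_⟩⟩
      simp only [uEx19, if_neg (Rat.not_irrational q)]
      have : (0:ℝ) ≤ q := le_of_lt hqI.1
      linarith
    rw [hclosed] at hmem
    obtain ⟨hcI, hcle⟩ := hmem
    rw [uEx19, if_pos hcirr] at hcle
    have : c < 1 := hc01.2
    linarith
end
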